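/- The COTS-distance function d on a path-connected finite topological space, defined as one less than the cardinality of a shortest COTS-arc connecting two points, is a metric: d(x,x)=0, d(x,y)=d(y,x), and d(x,z) ≤ d(x,y) + d(y,z). -/

import Mathlib

open Set

/-- The minimal open neighborhood of a point in a topological space. -/
def minOpenNhd {X : Type*} (t : TopologicalSpace X) (x : X) : Set X :=
  ⋂₀ {U : Set X | t.IsOpen U ∧ x ∈ U}

/-- The specialization-style preorder: `x ≤ y` iff `U_x ⊆ U_y`. -/
def specLE {X : Type*} (t : TopologicalSpace X) (x y : X) : Prop :=
  minOpenNhd t x ⊆ minOpenNhd t y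

/-- Two points are adjacent if distinct and comparable in the specialization order. -/
def Adjacent {X : Type*} (t : TopologicalSpace X) (x y : X) : Prop :=
  x ≠ y ∧ (specLE t x y ∨ specLE t y x)

/-- The adjacency set of a point. -/
def adjSet {X : Type*} (t : TopologicalSpace X) (x : X) : Set X := {y | Adjacent t x y}

/-- A COTS: a connected space in which every 3-point subset has a point separating
the other two. -/
def IsCOTS {X : Type*} (t : TopologicalSpace X) : Prop :=
  @ConnectedSpace X t ∧
    ∀ Y : Set X, Y.ncard = 3 →
      ∃ y ∈ Y, ∃ a ∈ Y \ {y}, ∃ b ∈ Y \ {y},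
        @connectedComponentIn X t {y}ᶜ a ≠ @connectedComponentIn X t {y}ᶜ b

/-- An endpoint of a COTS: a point with at most one neighbor. -/
def IsEndpoint {X : Type*} (t : TopologicalSpace X) (x : X) : Prop :=
  (adjSet t x).ncard ≤ 1

/-- A COTS-path: the continuous image of a finite COTS. -/
def IsCOTSPath {Y : Type*} (tY : TopologicalSpace Y) (P : Set Y) : Prop :=
  ∃ (C : Type) (tC : TopologicalSpace C), Finite C ∧ IsCOTS tC ∧
    ∃ f : C → Y, @Continuous C Y tC tY f ∧ Set.range f = P

/-- A COTS-path with prescribed start and end points. -/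
def IsCOTSPathFromTo {Y : Type*} (tY : TopologicalSpace Y) (P : Set Y) (a b : Y) : Prop :=
  ∃ (C : Type) (tC : TopologicalSpace C), Finite C ∧ IsCOTS tC ∧
    ∃ f : C → Y, @Continuous C Y tC tY f ∧ Set.range f = P ∧
      ∃ c₀ c₁ : C, IsEndpoint tC c₀ ∧ IsEndpoint tC c₁ ∧ f c₀ = a ∧ f c₁ = b

/-- A COTS-arc: the homeomorphic image of a finite COTS. -/
def IsCOTSArc {Y : Type*} (tY : TopologicalSpace Y) (A : Set Y) : Prop :=
  ∃ (C : Type) (tC : TopologicalSpace C), Finite C ∧ IsCOTS tC ∧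
    ∃ f : C → Y, @Topology.IsEmbedding C Y tC tY f ∧ Set.range f = A

/-- A COTS-arc with prescribed endpoints. -/
def IsCOTSArcFromTo {Y : Type*} (tY : TopologicalSpace Y) (A : Set Y) (a b : Y) : Prop :=
  ∃ (C : Type) (tC : TopologicalSpace C), Finite C ∧ IsCOTS tC ∧
    ∃ f : C → Y, @Topology.IsEmbedding C Y tC tY f ∧ Set.range f = A ∧
      ∃ c₀ c₁ : C, IsEndpoint tC c₀ ∧ IsEndpoint tC c₁ ∧ f c₀ = a ∧ f c₁ = b

/-- The COTS-distance: one less than the minimal cardinality of a COTS-arc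
joining two points (`⊤` if there is no such arc). -/
noncomputable def cotsDist {X : Type*} (t : TopologicalSpace X) (x y : X) : ℕ∞ :=
  sInf {n : ℕ∞ | ∃ A : Set X, IsCOTSArcFromTo t A x y ∧ (A.ncard : ℕ∞) = n + 1}

/-- The Khalimsky topology on ℤ. -/
def khal : TopologicalSpace ℤ :=
  TopologicalSpace.generateFrom
    {s : Set ℤ | ∃ n : ℤ, (Odd n ∧ s = {n}) ∨ (Even n ∧ s = {n - 1, n, n + 1})}

/-- The Khalimsky plane topology on ℤ × ℤ. -/
def khalPlane : TopologicalSpace (ℤ × ℤ) := @instTopologicalSpaceProd ℤ ℤ khal khal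

/-- A point of the Khalimsky plane is pure if its coordinates have the same parity. -/
def IsPurePt (p : ℤ × ℤ) : Prop := (Even p.1 ∧ Even p.2) ∨ (Odd p.1 ∧ Odd p.2)

/-- A digital Jordan curve: a finite set of at least 4 points such that removing
any point leaves a COTS-arc. -/
def IsJordanCurve {X : Type*} (t : TopologicalSpace X) (J : Set X) : Prop :=
  J.Finite ∧ 4 ≤ J.ncard ∧ ∀ j ∈ J, IsCOTSArc t (J \ {j})

/-- The interior of a digital Jordan curve in the Khalimsky plane: the union of the
finite (bounded) connected components of its complement. -/
def jInterior (J : Set (ℤ × ℤ)) : Set (ℤ × ℤ) :=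
  ⋃₀ {S | ∃ p ∉ J, S = @connectedComponentIn _ khalPlane Jᶜ p ∧ S.Finite}

/-!
Call two points adjacent if they are distinct and one specializes to the other. A COTS-arc
from `x` to `y` on `k` points yields, by connectedness of the underlying finite COTS, a walk
from `x` to `y` in this adjacency graph with at most `k` vertices. Conversely, a shortest
walk has no chords, so its vertices, with the subspace topology, form a fence in which only
consecutive points are comparable; removing an inner point disconnects it, so it is a COTS-arc.
Hence `cotsDist` is the graph distance of the adjacency graph, an extended metric.
-/

open Topology Function SimpleGraph

section Adjacency

variable {X : Type*} [t : TopologicalSpace X]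

lemma mem_minOpenNhd_iff {x y : X} : y ∈ minOpenNhd t x ↔ y ⤳ x := by
  simp only [minOpenNhd, mem_sInter, mem_ofPred_eq, and_imp, specializes_iff_forall_open]
  exact Iff.rfl

lemma specLE_iff_specializes {x y : X} : specLE t x y ↔ x ⤳ y :=
  ⟨fun h => mem_minOpenNhd_iff.1 (h (mem_minOpenNhd_iff.2 specializes_rfl)),
    fun h _ hz => mem_minOpenNhd_iff.2 ((mem_minOpenNhd_iff.1 hz).trans h)⟩

lemma adjacent_iff_specializes {x y : X} : Adjacent t x y ↔ x ≠ y ∧ (x ⤳ y ∨ y ⤳ x) := by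
  simp only [Adjacent, specLE_iff_specializes]

def adjacencyGraph (t : TopologicalSpace X) : SimpleGraph X where
  Adj := Adjacent t
  symm := ⟨fun _ _ h => ⟨h.1.symm, h.2.symm⟩⟩
  loopless := ⟨fun _ h => h.1 rfl⟩

lemma adjacencyGraph_adj {x y : X} :
    (adjacencyGraph t).Adj x y ↔ x ≠ y ∧ (x ⤳ y ∨ y ⤳ x) :=
  adjacent_iff_specializes

lemma Topology.IsEmbedding.adjacencyGraph_adj_iff {Y : Type*} [tY : TopologicalSpace Y]
    {f : Y → X} (hf : IsEmbedding f) {a b : Y} :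
    (adjacencyGraph t).Adj (f a) (f b) ↔ (adjacencyGraph tY).Adj a b := by
  simp only [adjacencyGraph_adj, hf.isInducing.specializes_iff, hf.injective.ne_iff]

lemma IsClopen.mem_iff_of_reachable {s : Set X} (hs : IsClopen s) {x y : X}
    (h : (adjacencyGraph t).Reachable x y) : x ∈ s ↔ y ∈ s := by
  obtain ⟨p⟩ := h
  induction p with
  | nil => rfl
  | cons hadj _ ih =>
    refine Iff.trans ?_ ih
    rcases (adjacencyGraph_adj.1 hadj).2 with h | h
    · exact ⟨fun hx => h.mem_closed hs.1 hx, fun hy => h.mem_open hs.2 hy⟩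
    · exact ⟨fun hx => h.mem_open hs.2 hx, fun hy => h.mem_closed hs.1 hy⟩

lemma preconnectedSpace_of_preconnected_adjacencyGraph
    (h : (adjacencyGraph t).Preconnected) : PreconnectedSpace X := by
  refine preconnectedSpace_iff_clopen.2 fun s hs => ?_
  rcases s.eq_empty_or_nonempty with hempty | ⟨x, hx⟩
  · exact Or.inl hempty
  · exact Or.inr (eq_univ_of_forall fun y => (hs.mem_iff_of_reachable (h x y)).1 hx)

lemma IsPreconnected.induction_of_specializes [AlexandrovDiscrete X] {S : Set X}
    (hS : IsPreconnected S) {P : X → Prop}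
    (hP : ∀ x ∈ S, ∀ y ∈ S, x ⤳ y → (P x ↔ P y)) {x y : X} (hx : x ∈ S) (hy : y ∈ S)
    (h : P x) : P y := by
  have := isPreconnected_iff_preconnectedSpace.1 hS
  have hP' : ∀ z w : S, z ⤳ w → (P z ↔ P w) := fun z w hzw =>
    hP z z.2 w w.2 (hzw.map continuous_subtype_val)
  have hT : IsClopen {z : S | P z} :=
    ⟨isOpen_compl_iff.1
      (isOpen_iff_forall_specializes.2 fun z w hzw hw hz => hw ((hP' z w hzw).1 hz)),
    isOpen_iff_forall_specializes.2 fun z w hzw hw => (hP' z w hzw).2 hw⟩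
  exact Set.eq_univ_iff_forall.1 (hT.eq_univ ⟨⟨x, hx⟩, h⟩) ⟨y, hy⟩

lemma preconnected_adjacencyGraph [AlexandrovDiscrete X] [PreconnectedSpace X] :
    (adjacencyGraph t).Preconnected := by
  intro x y
  refine isPreconnected_univ.induction_of_specializes (P := (adjacencyGraph t).Reachable x)
    (fun a _ b _ hab => ?_) (mem_univ x) (mem_univ y) (Reachable.refl x)
  by_cases heq : a = b
  · rw [heq]
  · have hadj : (adjacencyGraph t).Adj a b := adjacencyGraph_adj.2 ⟨heq, Or.inl hab⟩
    exact ⟨fun h => h.trans hadj.reachable, fun h => h.trans hadj.symm.reachable⟩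

end Adjacency

lemma connectedComponentIn_compl_singleton_ne {C : Type*} [TopologicalSpace C]
    [AlexandrovDiscrete C] [LinearOrder C] {i j k : C} (hij : i < j) (hjk : j < k)
    (hgap : ∀ x y, x ≠ j → y ≠ j → x ⤳ y → (x < j ↔ y < j)) :
    connectedComponentIn {j}ᶜ i ≠ connectedComponentIn {j}ᶜ k := by
  intro heq
  have hk : k ∈ connectedComponentIn {j}ᶜ i := heq ▸ mem_connectedComponentIn hjk.ne'
  have hsub : connectedComponentIn {j}ᶜ i ⊆ {j}ᶜ := connectedComponentIn_subset _ _
  have hkj : k < j := isPreconnected_connectedComponentIn.induction_of_specializes (P := (· < j))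
    (fun x hx y hy hxy => hgap x y (hsub hx) (hsub hy) hxy)
    (mem_connectedComponentIn hij.ne) hk hij
  exact hkj.not_gt hjk

structure IsInducedPath {V : Type*} (G : SimpleGraph V) {n : ℕ} (h : Fin (n + 1) → V) :
    Prop where
  injective : Injective h
  adj_succ : ∀ i : Fin n, G.Adj (h i.castSucc) (h i.succ)
  not_adj : ∀ i j : Fin (n + 1), (i : ℕ) + 2 ≤ j → ¬ G.Adj (h i) (h j)

lemma SimpleGraph.Walk.isInducedPath_getVert {V : Type*} {G : SimpleGraph V} {u v : V}
    (p : G.Walk u v) (hp : (p.length : ℕ∞) = G.edist u v) :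
    IsInducedPath G (fun i : Fin (p.length + 1) => p.getVert i) := by
  have hpath : p.IsPath := p.isPath_of_length_eq_dist <| by
    exact_mod_cast hp.trans p.reachable.coe_dist_eq_edist.symm
  refine ⟨fun i j hij => Fin.ext (hpath.getVert_injOn i.is_le j.is_le hij),
    fun i => by simpa using p.adj_getVert_succ i.is_lt, fun i j hij hadj => ?_⟩
  have hshort := G.edist_le ((p.take i).append (cons hadj (p.drop j)))
  simp only [length_append, take_length, length_cons, drop_length] at hshort
  rw [← hp] at hshort
  have := j.is_le
  norm_cast at hshort
  omega

section InducedPath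

variable {X : Type*} [t : TopologicalSpace X] {n : ℕ} {h : Fin (n + 1) → X}

lemma IsInducedPath.le_add_one_of_specializes (hh : IsInducedPath (adjacencyGraph t) h)
    {i j : Fin (n + 1)} (hij : h i ⤳ h j) : (i : ℕ) ≤ j + 1 ∧ (j : ℕ) ≤ i + 1 := by
  by_cases heq : i = j
  · simp [heq]
  have hne : h i ≠ h j := hh.injective.ne heq
  constructor <;> by_contra! hfar
  · exact hh.not_adj j i (by omega) (adjacencyGraph_adj.2 ⟨hne.symm, Or.inr hij⟩)
  · exact hh.not_adj i j (by omega) (adjacencyGraph_adj.2 ⟨hne, Or.inl hij⟩)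

lemma IsInducedPath.isCOTS_induced (hh : IsInducedPath (adjacencyGraph t) h) :
    IsCOTS (t.induced h) := by
  -- shadows the global (discrete) topology on `Fin (n + 1)`
  let _ : TopologicalSpace (Fin (n + 1)) := t.induced h
  have hemb : IsEmbedding h := hh.injective.isEmbedding_induced
  have hreach : ∀ i : Fin (n + 1), (adjacencyGraph (t.induced h)).Reachable 0 i := by
    refine Fin.induction (Reachable.refl 0) fun i hi => hi.trans (Adj.reachable ?_)
    exact hemb.adjacencyGraph_adj_iff.1 (hh.adj_succ i)
  have : PreconnectedSpace (Fin (n + 1)) :=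
    preconnectedSpace_of_preconnected_adjacencyGraph fun i j => (hreach i).symm.trans (hreach j)
  refine ⟨{ toNonempty := ⟨0⟩ }, fun Y hY => ?_⟩
  have hcard : Y.toFinite.toFinset.card = 3 := by rwa [← Set.ncard_eq_toFinset_card]
  set e := Y.toFinite.toFinset.orderEmbOfFin hcard
  have he : ∀ k, e k ∈ Y := fun k =>
    Y.toFinite.mem_toFinset.1 (Y.toFinite.toFinset.orderEmbOfFin_mem hcard k)
  refine ⟨e 1, he 1, e 0, ⟨he 0, e.injective.ne (by decide)⟩, e 2,
    ⟨he 2, e.injective.ne (by decide)⟩,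
    connectedComponentIn_compl_singleton_ne (e.strictMono (by decide))
      (e.strictMono (by decide)) fun x y hx hy hxy => ?_⟩
  have := hh.le_add_one_of_specializes (hemb.isInducing.specializes_iff.2 hxy)
  have := Fin.val_ne_of_ne hx
  have := Fin.val_ne_of_ne hy
  simp only [Fin.lt_def]
  omega

lemma IsInducedPath.isEndpoint_induced (hh : IsInducedPath (adjacencyGraph t) h)
    {i : Fin (n + 1)} (hi : (i : ℕ) = 0 ∨ (i : ℕ) = n) : IsEndpoint (t.induced h) i := by
  let _ : TopologicalSpace (Fin (n + 1)) := t.induced h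
  have hemb : IsEmbedding h := hh.injective.isEmbedding_induced
  have hnear : ∀ y ∈ adjSet (t.induced h) i, (y : ℕ) ≠ i ∧ (y : ℕ) ≤ i + 1 ∧ (i : ℕ) ≤ y + 1 :=
    fun y hy => by
      obtain ⟨hne, hs⟩ := adjacencyGraph_adj.1 hy
      have := Fin.val_ne_of_ne hne
      rcases hs with hs | hs <;>
        have := hh.le_add_one_of_specializes (hemb.isInducing.specializes_iff.2 hs) <;> omega
  refine (Set.ncard_le_one_iff (Set.toFinite _)).2 fun hy hz => Fin.ext ?_
  have := hnear _ hy
  have := hnear _ hz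
  omega

lemma IsInducedPath.isCOTSArcFromTo (hh : IsInducedPath (adjacencyGraph t) h) :
    IsCOTSArcFromTo t (range h) (h 0) (h (Fin.last n)) :=
  ⟨Fin (n + 1), t.induced h, inferInstance, hh.isCOTS_induced, h,
    hh.injective.isEmbedding_induced, rfl, 0, Fin.last n, hh.isEndpoint_induced (Or.inl rfl),
    hh.isEndpoint_induced (Or.inr rfl), rfl, rfl⟩

end InducedPath

section Distance

variable {X : Type*} [t : TopologicalSpace X]

lemma IsCOTSArcFromTo.edist_add_one_le {A : Set X} {x y : X} (hA : IsCOTSArcFromTo t A x y) :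
    (adjacencyGraph t).edist x y + 1 ≤ A.ncard := by
  obtain ⟨C, tC, hfin, hcots, f, hemb, rfl, c₀, c₁, -, -, rfl, rfl⟩ := hA
  have := hcots.1
  have := Fintype.ofFinite C
  obtain ⟨p, hpath, -⟩ := (preconnected_adjacencyGraph c₀ c₁).exists_path_of_dist
  let φ : adjacencyGraph tC →g adjacencyGraph t := ⟨f, hemb.adjacencyGraph_adj_iff.2⟩
  calc (adjacencyGraph t).edist (f c₀) (f c₁) + 1 ≤ (p.map φ).length + 1 := by
        gcongr; exact edist_le _
    _ ≤ Fintype.card C := by rw [Walk.length_map]; exact_mod_cast hpath.length_lt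
    _ = (range f).ncard := by
        rw [Set.ncard_range_of_injective hemb.injective, Nat.card_eq_fintype_card]

theorem cotsDist_eq_edist (x y : X) : cotsDist t x y = (adjacencyGraph t).edist x y := by
  refine le_antisymm ?_ (le_sInf ?_)
  · rcases eq_or_ne ((adjacencyGraph t).edist x y) ⊤ with htop | htop
    · exact htop ▸ le_top
    obtain ⟨p, hp⟩ := exists_walk_of_edist_ne_top htop
    have hh := p.isInducedPath_getVert hp
    refine hp ▸ sInf_le ⟨_, by simpa using hh.isCOTSArcFromTo, ?_⟩
    rw [Set.ncard_range_of_injective hh.injective, Nat.card_fin]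
    push_cast
    rfl
  · rintro m ⟨A, hA, hcard⟩
    have := hA.edist_add_one_le
    rw [hcard] at this
    exact (ENat.add_le_add_iff_right ENat.one_ne_top).1 this

end Distance

theorem stmt6_general {X : Type*} [t : TopologicalSpace X] :
    (∀ x : X, cotsDist t x x = 0) ∧
    (∀ x y : X, cotsDist t x y = cotsDist t y x) ∧
    (∀ x y z : X, cotsDist t x z ≤ cotsDist t x y + cotsDist t y z) := by
  simp only [cotsDist_eq_edist]
  exact ⟨fun _ => edist_self, fun _ _ => edist_comm, fun _ _ _ => SimpleGraph.edist_triangle⟩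

/-- The COTS-distance on a path-connected finite space is a metric. -/
theorem stmt6 {X : Type*} [t : TopologicalSpace X] [Finite X] [PathConnectedSpace X] :
    (∀ x : X, cotsDist t x x = 0) ∧
    (∀ x y : X, cotsDist t x y = cotsDist t y x) ∧
    (∀ x y z : X, cotsDist t x z ≤ cotsDist t x y + cotsDist t y z) :=
  stmt6_general (t := t)
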